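/- arXiv:2007.04924 — 6 statements merged into one kernel-verified Lean document; each statement's English description precedes it below -/
import Mathlib

section
/- Let A be a ring, M a noetherian left A-module, φ a ring automorphism of A, and suppose there are A-module morphisms u : M → M_φ and v : M_φ → M (where M_φ denotes M with A-action twisted by φ) such that v ∘ u = id_M. Then u and v are isomorphisms. -/
/-- If `M` is a noetherian left `A`-module, `φ` a ring automorphism of `A`, and
`u : M → M_φ`, `v : M_φ → M` are `A`-module maps (expressed as additive maps that
are semilinear for the twisted action `a · m = φ a • m`) with `v ∘ u = id`, then
`u` and `v` are isomorphisms. -/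
theorem stmt0 {A M : Type*} [Ring A] [AddCommGroup M] [Module A M]
    [IsNoetherian A M] (φ : A ≃+* A) (u v : M →+ M)
    (hu : ∀ (a : A) (m : M), u (a • m) = φ a • u m)
    (hv : ∀ (a : A) (m : M), v (φ a • m) = a • v m)
    (hvu : ∀ m : M, v (u m) = m) :
    Function.Bijective u ∧ Function.Bijective v := by
  -- v is semilinear for φ.symm:
  have hv' : ∀ (a : A) (m : M), v (a • m) = φ.symm a • v m := by
    intro a m
    have := hv (φ.symm a) m
    rwa [φ.apply_symm_apply] at this
  -- iterates of v are semilinear: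
  have hvn : ∀ (n : ℕ) (a : A) (m : M), (⇑v)^[n] (a • m) = (⇑φ.symm)^[n] a • (⇑v)^[n] m := by
    intro n
    induction n with
    | zero => intro a m; simp
    | succ n ih =>
      intro a m
      rw [Function.iterate_succ_apply', Function.iterate_succ_apply', ih, hv',
        Function.iterate_succ_apply']
  -- kernels of iterates of v, as submodules
  let K : ℕ → Submodule A M := fun n =>
    { carrier := {m | (⇑v)^[n] m = 0}
      add_mem' := by
        intro a b ha hb
        simp only [Set.mem_setOf_eq] at *
        have hadd : ∀ (k : ℕ) (x y : M), (⇑v)^[k] (x + y) = (⇑v)^[k] x + (⇑v)^[k] y := by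
          intro k
          induction k with
          | zero => intro x y; rfl
          | succ k ih =>
            intro x y
            rw [Function.iterate_succ_apply', Function.iterate_succ_apply',
              Function.iterate_succ_apply', ih, v.map_add]
        rw [hadd, ha, hb, add_zero]
      zero_mem' := by
        simp only [Set.mem_setOf_eq]
        induction n with
        | zero => rfl
        | succ n ih => rw [Function.iterate_succ_apply', ih, v.map_zero]
      smul_mem' := by
        intro a m hm
        simp only [Set.mem_setOf_eq] at *
        rw [hvn, hm, smul_zero] }
  have hKmono : Monotone K := by
    apply monotone_nat_of_le_succ
    intro n m hm
    simp only [K, Submodule.mem_mk, AddSubmonoid.mem_mk, AddSubsemigroup.mem_mk,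
      Set.mem_setOf_eq] at *
    rw [Function.iterate_succ_apply', hm, v.map_zero]
  obtain ⟨n, hn⟩ := monotone_stabilizes_iff_noetherian.mpr ‹IsNoetherian A M› ⟨K, hKmono⟩
  have hvsurj : Function.Surjective v := fun m => ⟨u m, hvu m⟩
  have hvinj : Function.Injective v := by
    rw [injective_iff_map_eq_zero]
    intro x hx
    obtain ⟨y, hy⟩ := (hvsurj.iterate n) x
    have hy1 : y ∈ K (n + 1) := by
      show (⇑v)^[n + 1] y = 0
      rw [Function.iterate_succ_apply', hy, hx]
    have heq : K n = K (n + 1) := hn (n + 1) (Nat.le_succ n)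
    rw [← heq] at hy1
    have : (⇑v)^[n] y = 0 := hy1
    rw [← hy, this]
  have hvbij : Function.Bijective v := ⟨hvinj, hvsurj⟩
  refine ⟨⟨fun a b hab => ?_, fun m => ⟨v m, hvinj (by rw [hvu])⟩⟩, hvbij⟩
  rw [← hvu a, ← hvu b, hab]
end

section
/- Let A be a ring, M a noetherian left A-module, and φ an automorphism of A. If M_φ ≅ M ⊕ X as A-modules for some module X, then X = 0. -/
/-!
The first component `g` of `e` is a surjective `φ⁻¹`-semilinear endomorphism of `M`.
The kernels of its iterates `gⁿ` are still `A`-submodules, so by noetherianity they stabilize,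
and together with surjectivity of `g` this forces `g` to be injective (Orzech's argument).
Since `g (e⁻¹ (0, x)) = 0`, every `x : X` vanishes.
-/

open Function

theorem Submodule.mem_iterate_comap_bot_iff {R M : Type*} [Semiring R] [AddCommMonoid M]
    [Module R M] {σ : R →+* R} (f : M →ₛₗ[σ] M) (n : ℕ) (x : M) :
    x ∈ (comap f)^[n] ⊥ ↔ f^[n] x = 0 := by
  induction n generalizing x with
  | zero => exact mem_bot R
  | succ n ih => rw [iterate_succ_apply', mem_comap, ih, iterate_succ_apply]

theorem IsNoetherian.injective_of_surjective_semilinear_endomorphism {R M : Type*} [Ring R]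
    [AddCommGroup M] [Module R M] [IsNoetherian R M] {σ : R →+* R} (f : M →ₛₗ[σ] M)
    (hf : Surjective f) : Injective f := by
  have hmono : Monotone fun n ↦ (Submodule.comap f)^[n] ⊥ :=
    Monotone.monotone_iterate_of_le_map (fun _ _ ↦ Submodule.comap_mono) bot_le
  obtain ⟨n, hn⟩ := monotone_stabilizes_iff_noetherian.mpr ‹_› ⟨_, hmono⟩
  refine (injective_iff_map_eq_zero f).mpr fun x hx ↦ ?_
  obtain ⟨y, rfl⟩ := hf.iterate n x
  have hy : y ∈ (Submodule.comap f)^[n + 1] ⊥ := by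
    rwa [Submodule.mem_iterate_comap_bot_iff, iterate_succ_apply']
  have hstable : (Submodule.comap f)^[n] ⊥ = (Submodule.comap f)^[n + 1] ⊥ := hn _ n.le_succ
  rwa [← hstable, Submodule.mem_iterate_comap_bot_iff] at hy

def twistedFst {A M X : Type*} [Ring A] [AddCommGroup M] [Module A M] [AddCommGroup X]
    [Module A X] (φ : A ≃+* A) (e : M ≃+ M × X)
    (he : ∀ (a : A) (m : M), e (φ a • m) = a • e m) : M →ₛₗ[(φ.symm : A →+* A)] M where
  toFun m := (e m).1
  map_add' _ _ := by simp
  map_smul' b m := by simpa using congrArg Prod.fst (he (φ.symm b) m)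

/-- If `M` is a noetherian left `A`-module, `φ` a ring automorphism of `A`, and
`M_φ ≅ M ⊕ X` as `A`-modules (the isomorphism `e : M ≃+ M × X` being `A`-linear for
the twisted action `a · m = φ a • m` on the source), then `X = 0`. -/
theorem stmt1 {A M X : Type*} [Ring A] [AddCommGroup M] [Module A M]
    [IsNoetherian A M] [AddCommGroup X] [Module A X] (φ : A ≃+* A)
    (e : M ≃+ M × X)
    (he : ∀ (a : A) (m : M), e (φ a • m) = a • e m) :
    Subsingleton X := by
  set g := twistedFst φ e he
  have hg : Surjective g := fun m ↦ ⟨e.symm (m, 0), by simp [g, twistedFst]⟩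
  refine subsingleton_of_forall_eq 0 fun x ↦ ?_
  have h0 : e.symm (0, x) = 0 :=
    IsNoetherian.injective_of_surjective_semilinear_endomorphism g hg (by simp [g, twistedFst])
  simpa using congrArg Prod.snd (e.symm_apply_eq.mp h0)
end

section
/- Let V be a finite-dimensional real vector space with an affine hyperplane arrangement 𝓗, and let 𝓒 be the induced face poset with chambers 𝓒⁰. If C ∈ 𝓒 is not a chamber and ν ∈ C, then for the centrally symmetric convex body Δ (with Δ = -Δ) defining 𝓛_C := (ν + Δ) ∩ Λ for a lattice Λ, one has 𝓛_C = ⋃_{C₀ ∈ 𝓒⁰, C₀ > C} 𝓛_{C₀}, provided that for each chamber C₀ > C' the set 𝓛_{C₀} ⊆ 𝓛_{C'} and that Δ is full-dimensional. -/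
open scoped Pointwise

/-- The face of the affine hyperplane arrangement `{f i = 0}` determined by the sign
vector `s`. -/
def arrFace {V ι : Type*} [AddCommGroup V] [Module ℝ V]
    (f : ι → V →ᵃ[ℝ] ℝ) (s : ι → SignType) : Set V :=
  {x | ∀ i, SignType.sign (f i x) = s i}

private lemma sign_eq_sign_of_mul_pos {a b : ℝ} (h : 0 < a * b) :
    SignType.sign a = SignType.sign b := by
  rcases lt_trichotomy a 0 with ha | ha | ha
  · have hb : b < 0 := by nlinarith
    rw [sign_neg ha, sign_neg hb]
  · rw [ha, zero_mul] at h; exact absurd h (lt_irrefl 0)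
  · have hb : 0 < b := by nlinarith
    rw [sign_pos ha, sign_pos hb]

private lemma mul_pos_of_sign_eq {a b : ℝ} (hb : b ≠ 0)
    (h : SignType.sign a = SignType.sign b) : 0 < a * b := by
  have ha : a ≠ 0 := by
    intro h0
    rw [h0, sign_zero] at h
    exact hb (sign_eq_zero_iff.mp h.symm)
  rcases ha.lt_or_gt with ha' | ha' <;> rcases hb.lt_or_gt with hb' | hb'
  · exact mul_pos_of_neg_of_neg ha' hb'
  · rw [sign_neg ha', sign_pos hb'] at h; exact absurd h (by decide)
  · rw [sign_pos ha', sign_neg hb'] at h; exact absurd h (by decide)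
  · exact mul_pos ha' hb'

/-- Sign of a point on the open segment from `a` towards `b`. -/
private lemma sign_lineMap_aux {a b t : ℝ} (ht : 0 < t) (ht1 : t ≤ 1) (hb : b ≠ 0)
    (hab : a = 0 ∨ SignType.sign a = SignType.sign b) :
    SignType.sign (AffineMap.lineMap a b t) = SignType.sign b := by
  apply sign_eq_sign_of_mul_pos
  have hlm : (AffineMap.lineMap a b t : ℝ) = t * (b - a) + a := by
    simp [AffineMap.lineMap_apply, smul_eq_mul]
  rw [hlm]
  have hbb : 0 < b * b := mul_self_pos.mpr hb
  rcases hab with h0 | hs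
  · subst h0; nlinarith
  · have hab' : 0 < a * b := mul_pos_of_sign_eq hb hs
    nlinarith

/-- An affine function with no zeroes on a convex set has constant sign there. -/
private lemma sign_const_on {V : Type*} [NormedAddCommGroup V] [NormedSpace ℝ V]
    [FiniteDimensional ℝ V] (g : V →ᵃ[ℝ] ℝ) {S : Set V} (hS : Convex ℝ S)
    (h0 : ∀ x ∈ S, g x ≠ 0) {a b : V} (ha : a ∈ S) (hb : b ∈ S) :
    SignType.sign (g a) = SignType.sign (g b) := by
  apply sign_eq_sign_of_mul_pos
  by_contra hcon
  push_neg at hcon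
  have hne : g a * g b ≠ 0 := mul_ne_zero (h0 a ha) (h0 b hb)
  have hlt : g a * g b < 0 := lt_of_le_of_ne hcon hne
  set F : ℝ → ℝ := fun u => g (AffineMap.lineMap a b u) with hF
  have hFc : Continuous F := by
    have : F = (g.comp (AffineMap.lineMap a b)) := rfl
    rw [this]
    exact AffineMap.continuous_of_finiteDimensional _
  have h0mem : (0 : ℝ) ∈ Set.uIcc (F 0) (F 1) := by
    have hF0 : F 0 = g a := by simp [hF]
    have hF1 : F 1 = g b := by simp [hF]
    rw [hF0, hF1, Set.mem_uIcc]
    rcases (h0 a ha).lt_or_gt with h | h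
    · left
      constructor
      · exact h.le
      · nlinarith
    · right
      constructor
      · nlinarith
      · exact h.le
  obtain ⟨u, hu, hFu⟩ := intermediate_value_uIcc hFc.continuousOn h0mem
  rw [Set.uIcc_of_le zero_le_one] at hu
  have hmem : AffineMap.lineMap a b u ∈ S := by
    have : AffineMap.lineMap a b u ∈ segment ℝ a b := by
      rw [segment_eq_image_lineMap]
      exact ⟨u, hu, rfl⟩
    exact hS.segment_subset ha hb this
  exact h0 _ hmem hFu

/-- The complement of an affine hyperplane is dense. -/
private lemma dense_compl_hyperplane {V : Type*} [NormedAddCommGroup V] [NormedSpace ℝ V]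
    [FiniteDimensional ℝ V] (g : V →ᵃ[ℝ] ℝ) (hg : g.linear ≠ 0) :
    Dense {x : V | g x ≠ 0} := by
  obtain ⟨v, hv⟩ : ∃ v, g.linear v ≠ 0 := by
    by_contra hcon
    push_neg at hcon
    exact hg (LinearMap.ext fun w => by simpa using hcon w)
  have hv0 : v ≠ 0 := fun h => hv (by rw [h, map_zero])
  intro x
  by_cases hx : g x = 0
  · rw [Metric.mem_closure_iff]
    intro ε hε
    refine ⟨(ε / (2 * ‖v‖)) • v +ᵥ x, ?_, ?_⟩
    · show g ((ε / (2 * ‖v‖)) • v +ᵥ x) ≠ 0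
      rw [AffineMap.map_vadd, map_smul]
      simp only [vadd_eq_add, hx, add_zero, smul_eq_mul]
      have hvn : 0 < ‖v‖ := norm_pos_iff.mpr hv0
      have : ε / (2 * ‖v‖) ≠ 0 := by positivity
      exact mul_ne_zero this hv
    · have : dist x ((ε / (2 * ‖v‖)) • v +ᵥ x) = ‖(ε / (2 * ‖v‖)) • v‖ := by
        rw [dist_eq_norm, vadd_eq_add]
        simp [norm_sub_rev]
      rw [this, norm_smul, Real.norm_eq_abs]
      have hvn : 0 < ‖v‖ := norm_pos_iff.mpr hv0
      rw [abs_of_pos (by positivity)]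
      rw [div_mul_eq_mul_div, div_lt_iff₀ (by positivity)]
      nlinarith
  · exact subset_closure hx

private lemma small_t {N ε : ℝ} (hN : 0 ≤ N) (hε : 0 < ε) :
    ∃ t : ℝ, 0 < t ∧ t ≤ 1 ∧ t * N < ε := by
  refine ⟨min 1 (ε / (2 * (N + 1))), lt_min one_pos (by positivity), min_le_left _ _, ?_⟩
  have h1 : min 1 (ε / (2 * (N + 1))) ≤ ε / (2 * (N + 1)) := min_le_right _ _
  have h2 : ε / (2 * (N + 1)) * N < ε := by
    rw [div_mul_eq_mul_div, div_lt_iff₀ (by positivity)]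
    nlinarith
  calc min 1 (ε / (2 * (N + 1))) * N ≤ ε / (2 * (N + 1)) * N :=
        mul_le_mul_of_nonneg_right h1 hN
    _ < ε := h2

/-- For a face `C` of a locally finite affine hyperplane arrangement which is not a
chamber, `𝓛_C = ⋃_{C₀ chamber, C₀ > C} 𝓛_{C₀}`, where `𝓛_C = (ν + Δ) ∩ Λ` for `ν ∈ C`
and a full-dimensional centrally symmetric convex body `Δ`, provided that
`𝓛_{C₀} ⊆ 𝓛_{C'}` whenever `C' ≤ C₀` with `C₀` a chamber. -/
theorem stmt8 {V ι : Type*} [NormedAddCommGroup V] [NormedSpace ℝ V]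
    [FiniteDimensional ℝ V]
    (f : ι → V →ᵃ[ℝ] ℝ)
    (hhyp : ∀ i, (f i).linear ≠ 0)
    (hlf : ∀ x : V, ∃ U ∈ nhds x, {i | ∃ y ∈ U, f i y = 0}.Finite)
    (Δ : Set V) (hconv : Convex ℝ Δ) (hcpt : IsCompact Δ)
    (hfull : (interior Δ).Nonempty) (hsymm : Δ = -Δ)
    (Λ : AddSubgroup V)
    (s : ι → SignType) (ν : V) (hν : ν ∈ arrFace f s)
    (hnc : ∃ i, s i = 0)
    (hmono : ∀ s₀ : ι → SignType, (∀ i, s₀ i ≠ 0) →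
      ∀ s' : ι → SignType, arrFace f s' ⊆ closure (arrFace f s₀) →
      ∀ ν' ∈ arrFace f s', ∀ ν₀ ∈ arrFace f s₀,
        (ν₀ +ᵥ Δ) ∩ (Λ : Set V) ⊆ (ν' +ᵥ Δ) ∩ (Λ : Set V)) :
    (ν +ᵥ Δ) ∩ (Λ : Set V) =
      ⋃ s₀ ∈ {s₀ : ι → SignType | (∀ i, s₀ i ≠ 0) ∧ (arrFace f s₀).Nonempty ∧
          arrFace f s ⊆ closure (arrFace f s₀)},
        ⋂ ν₀ ∈ arrFace f s₀, (ν₀ +ᵥ Δ) ∩ (Λ : Set V) := by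
  classical
  have hsymmem : ∀ x : V, x ∈ Δ → -x ∈ Δ := by
    intro x hx
    rw [hsymm]
    exact Set.neg_mem_neg.mpr hx
  ext χ
  constructor
  · rintro ⟨hχΔ, hχΛ⟩
    -- `ν ∈ χ +ᵥ Δ` by central symmetry
    have hχν : -ν +ᵥ χ ∈ Δ := Set.mem_vadd_set_iff_neg_vadd_mem.mp hχΔ
    have hνχ : ν ∈ χ +ᵥ Δ := by
      rw [Set.mem_vadd_set_iff_neg_vadd_mem]
      have := hsymmem _ hχν
      simpa [vadd_eq_add, neg_add_rev] using this
    -- an interior point of `χ +ᵥ Δ`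
    obtain ⟨d, hd⟩ := hfull
    have hint : χ +ᵥ interior Δ ⊆ interior (χ +ᵥ Δ) :=
      interior_maximal (Set.vadd_set_mono interior_subset) (isOpen_interior.vadd χ)
    have hp : χ + d ∈ interior (χ +ᵥ Δ) := hint (Set.vadd_mem_vadd_set hd)
    -- local finiteness data
    obtain ⟨U, hU, hUfin⟩ := hlf ν
    set Ifin : Finset ι := hUfin.toFinset with hIfin
    set J : Finset ι := Ifin.filter (fun i => s i ≠ 0) with hJ
    set W : Set V := ⋂ i ∈ J, {x : V | 0 < f i ν * f i x} with hW
    have hWopen : IsOpen W := by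
      refine isOpen_biInter_finset fun i _ => ?_
      exact isOpen_lt continuous_const
        (continuous_const.mul (AffineMap.continuous_of_finiteDimensional (f i)))
    have hνW : ν ∈ W := by
      refine Set.mem_biInter fun i hi => ?_
      have hsi : s i ≠ 0 := (Finset.mem_filter.mp hi).2
      have hfν : f i ν ≠ 0 := fun h => hsi (by rw [← hν i, h, sign_zero])
      exact mul_self_pos.mpr hfν
    obtain ⟨r, hr0, hball⟩ :=
      Metric.mem_nhds_iff.mp (Filter.inter_mem hU (hWopen.mem_nhds hνW))
    -- a point of `interior (χ +ᵥ Δ)` inside the ball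
    have hconvχ : Convex ℝ (χ +ᵥ Δ) := hconv.vadd χ
    obtain ⟨t, ht0, ht1, htN⟩ := small_t (norm_nonneg (χ + d - ν)) hr0
    set q : V := ν + t • (χ + d - ν) with hq
    have hqint : q ∈ interior (χ +ᵥ Δ) :=
      hconvχ.add_smul_sub_mem_interior hνχ hp ⟨ht0, ht1⟩
    have hqball : q ∈ Metric.ball ν r := by
      rw [Metric.mem_ball, dist_eq_norm, hq]
      simp only [add_sub_cancel_left]
      rw [norm_smul, Real.norm_eq_abs, abs_of_pos ht0]
      exact htN
    -- pick `ν₀` avoiding the hyperplanes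
    have hdense : Dense (⋂ i ∈ (Ifin : Set ι), {x : V | f i x ≠ 0}) := by
      refine dense_biInter_of_isOpen (fun i _ => ?_) Ifin.countable_toSet
        (fun i _ => dense_compl_hyperplane (f i) (hhyp i))
      exact IsOpen.preimage (AffineMap.continuous_of_finiteDimensional (f i)) isOpen_ne
    obtain ⟨ν₀, hν₀O, hν₀D⟩ := hdense.inter_open_nonempty
      (interior (χ +ᵥ Δ) ∩ Metric.ball ν r)
      (isOpen_interior.inter Metric.isOpen_ball) ⟨q, hqint, hqball⟩
    have hν₀int : ν₀ ∈ interior (χ +ᵥ Δ) := hν₀O.1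
    have hν₀ball : ν₀ ∈ Metric.ball ν r := hν₀O.2
    have hν₀ne : ∀ i, f i ν₀ ≠ 0 := by
      intro i
      by_cases hi : i ∈ Ifin
      · exact Set.mem_iInter₂.mp hν₀D i hi
      · intro h0
        exact hi (by rw [hIfin, Set.Finite.mem_toFinset]; exact ⟨ν₀, (hball hν₀ball).1, h0⟩)
    have hsign : ∀ i, s i ≠ 0 → SignType.sign (f i ν₀) = s i := by
      intro i hsi
      by_cases hi : i ∈ Ifin
      · have hiJ : i ∈ J := Finset.mem_filter.mpr ⟨hi, hsi⟩
        have h2 : ν₀ ∈ W := (hball hν₀ball).2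
        have h3 : 0 < f i ν * f i ν₀ := Set.mem_iInter₂.mp h2 i hiJ
        rw [← hν i]
        exact (sign_eq_sign_of_mul_pos h3).symm
      · have hnz : ∀ x ∈ Metric.ball ν r, f i x ≠ 0 := by
          intro x hx h0
          exact hi (by rw [hIfin, Set.Finite.mem_toFinset]; exact ⟨x, (hball hx).1, h0⟩)
        have := sign_const_on (f i) (convex_ball ν r) hnz
          (Metric.mem_ball_self hr0) hν₀ball
        rw [← hν i]
        exact this.symm
    -- the chamber containing `ν₀`
    set s₀ : ι → SignType := fun i => SignType.sign (f i ν₀) with hs₀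
    have hs₀ne : ∀ i, s₀ i ≠ 0 := by
      intro i
      simp only [hs₀, ne_eq, sign_eq_zero_iff]
      exact hν₀ne i
    have hν₀mem : ν₀ ∈ arrFace f s₀ := fun i => rfl
    have hsub : arrFace f s ⊆ closure (arrFace f s₀) := by
      intro y hy
      have hmem : ∀ u : ℝ, 0 < u → u ≤ 1 → AffineMap.lineMap y ν₀ u ∈ arrFace f s₀ := by
        intro u hu hu1 i
        rw [AffineMap.apply_lineMap]
        apply sign_lineMap_aux hu hu1 (hν₀ne i)
        by_cases hsi : s i = 0
        · left
          have := hy i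
          rw [hsi] at this
          exact sign_eq_zero_iff.mp this
        · right
          rw [hy i, hsign i hsi]
      rw [Metric.mem_closure_iff]
      intro ε hε
      obtain ⟨u, hu0, hu1, huN⟩ := small_t (norm_nonneg (ν₀ - y)) hε
      refine ⟨AffineMap.lineMap y ν₀ u, hmem u hu0 hu1, ?_⟩
      have : dist y (AffineMap.lineMap y ν₀ u) = ‖u • (ν₀ - y)‖ := by
        rw [AffineMap.lineMap_apply, dist_eq_norm, vadd_eq_add, vsub_eq_sub]
        simp [norm_sub_rev]
      rw [this, norm_smul, Real.norm_eq_abs, abs_of_pos hu0]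
      exact huN
    -- wrap up
    have hχν₀ : χ ∈ ν₀ +ᵥ Δ := by
      have h1 : -χ +ᵥ ν₀ ∈ Δ := Set.mem_vadd_set_iff_neg_vadd_mem.mp (interior_subset hν₀int)
      rw [Set.mem_vadd_set_iff_neg_vadd_mem]
      have := hsymmem _ h1
      simpa [vadd_eq_add, neg_add_rev] using this
    refine Set.mem_iUnion₂.mpr ⟨s₀, ⟨hs₀ne, ⟨ν₀, hν₀mem⟩, hsub⟩, ?_⟩
    refine Set.mem_iInter₂.mpr fun ν' hν' => ?_
    exact hmono s₀ hs₀ne s₀ subset_closure ν' hν' ν₀ hν₀mem ⟨hχν₀, hχΛ⟩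
  · intro hx
    obtain ⟨s₀, ⟨hs₀, ⟨ν₀, hν₀⟩, hsub⟩, hχ⟩ := Set.mem_iUnion₂.mp hx
    exact hmono s₀ hs₀ s hsub ν hν ν₀ hν₀ (Set.mem_iInter₂.mp hχ ν₀ hν₀)
end

section
/- Let W be a representation of a torus T with weights b₁,…,b_d ∈ X(T) that span X(T)_ℝ and satisfy quasi-symmetry (for each line ℓ through 0, ∑_{bᵢ∈ℓ} bᵢ = 0). Then ρ ∈ X(T)_ℝ lies in no proper subspace spanned by a subset of the bᵢ if and only if ρ lies in the boundary of no cone spanned by a subset of the bᵢ. -/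
open scoped Classical

section Helpers

variable {V : Type*} [NormedAddCommGroup V] [NormedSpace ℝ V] [FiniteDimensional ℝ V] {d : ℕ}

/-- The cone spanned by the subset `S` of the collection `b`. -/
def coneSet (b : Fin d → V) (S : Finset (Fin d)) : Set V :=
  {x : V | ∃ c : Fin d → ℝ, (∀ i, 0 ≤ c i) ∧ x = ∑ i ∈ S, c i • b i}

lemma coneSet_zero (b : Fin d → V) (S : Finset (Fin d)) : (0 : V) ∈ coneSet b S :=
  ⟨0, fun _ => le_rfl, by simp⟩

lemma coneSet_add {b : Fin d → V} {S : Finset (Fin d)} {x y : V}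
    (hx : x ∈ coneSet b S) (hy : y ∈ coneSet b S) : x + y ∈ coneSet b S := by
  obtain ⟨c, hc, rfl⟩ := hx
  obtain ⟨c', hc', rfl⟩ := hy
  exact ⟨fun i => c i + c' i, fun i => add_nonneg (hc i) (hc' i), by
    simp [add_smul, Finset.sum_add_distrib]⟩

lemma coneSet_smul {b : Fin d → V} {S : Finset (Fin d)} {x : V} {t : ℝ} (ht : 0 ≤ t)
    (hx : x ∈ coneSet b S) : t • x ∈ coneSet b S := by
  obtain ⟨c, hc, rfl⟩ := hx
  exact ⟨fun i => t * c i, fun i => mul_nonneg ht (hc i), by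
    simp [Finset.smul_sum, mul_smul]⟩

lemma coneSet_base {b : Fin d → V} {S : Finset (Fin d)} {i : Fin d} (hi : i ∈ S) :
    b i ∈ coneSet b S := by
  refine ⟨fun j => if j = i then 1 else 0, fun j => by dsimp only; split <;> norm_num, ?_⟩
  simp [ite_smul, Finset.sum_ite_eq', hi]

lemma coneSet_sum {b : Fin d → V} {S : Finset (Fin d)} (T : Finset (Fin d)) (g : Fin d → V)
    (hg : ∀ i ∈ T, g i ∈ coneSet b S) : ∑ i ∈ T, g i ∈ coneSet b S :=
  Finset.sum_induction g (· ∈ coneSet b S) (fun _ _ => coneSet_add) (coneSet_zero b S) hg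

lemma coneSet_convex (b : Fin d → V) (S : Finset (Fin d)) : Convex ℝ (coneSet b S) :=
  fun _ hx _ hy a a' ha ha' _ => coneSet_add (coneSet_smul ha hx) (coneSet_smul ha' hy)

lemma coneSet_subset_span (b : Fin d → V) (S : Finset (Fin d)) :
    coneSet b S ⊆ (Submodule.span ℝ (b '' ↑S) : Set V) := by
  rintro x ⟨c, hc, rfl⟩
  exact Submodule.sum_smul_mem _ _ fun i hi =>
    Submodule.subset_span ⟨i, by simpa using hi, rfl⟩

end Helpers

open scoped Classical in
/-- For a quasi-symmetric collection `b₁,…,b_d` spanning `X(T)_ℝ`: `ρ` lies in no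
proper subspace spanned by a subset of the `bᵢ` iff `ρ` lies in the boundary of no
cone spanned by a subset of the `bᵢ`. -/
theorem stmt12 {V : Type*} [NormedAddCommGroup V] [NormedSpace ℝ V]
    [FiniteDimensional ℝ V] {d : ℕ} (b : Fin d → V)
    (hspan : Submodule.span ℝ (Set.range b) = ⊤)
    (hqs : ∀ ℓ : Submodule ℝ V, Module.finrank ℝ ↥ℓ = 1 →
      (∑ i : Fin d, if b i ∈ ℓ then b i else 0) = 0)
    (ρ : V) :
    (∀ S : Finset (Fin d), Submodule.span ℝ (b '' ↑S) ≠ ⊤ →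
        ρ ∉ Submodule.span ℝ (b '' ↑S)) ↔
      ∀ S : Finset (Fin d),
        ρ ∉ frontier {x : V | ∃ c : Fin d → ℝ, (∀ i, 0 ≤ c i) ∧ x = ∑ i ∈ S, c i • b i} := by
  classical
  constructor
  · -- forward direction
    intro H S hρ
    have hρ' : ρ ∈ frontier (coneSet b S) := hρ
    obtain ⟨hcl, hni⟩ : ρ ∈ closure (coneSet b S) ∧ ρ ∉ interior (coneSet b S) := hρ'
    by_cases htop : Submodule.span ℝ (b '' (↑S : Set (Fin d))) = ⊤
    · -- the subset spans: use a separating functional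
      -- the cone has nonempty interior
      let g : (Fin d → ℝ) →ₗ[ℝ] V :=
        { toFun := fun c => ∑ i ∈ S, c i • b i
          map_add' := fun c c' => by simp [add_smul, Finset.sum_add_distrib]
          map_smul' := fun t c => by simp [Finset.smul_sum, mul_smul] }
      have hgsurj : Function.Surjective g := by
        rw [← LinearMap.range_eq_top, ← top_le_iff, ← htop, Submodule.span_le]
        rintro v ⟨i, hi, rfl⟩
        refine ⟨fun j => if j = i then 1 else 0, ?_⟩
        simp [g, ite_smul, Finset.sum_ite_eq', Finset.mem_coe.1 hi]
      have hopen : IsOpenMap g := g.isOpenMap_of_finiteDimensional hgsurj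
      have hPos : IsOpen {c : Fin d → ℝ | ∀ i, 0 < c i} := by
        have h : {c : Fin d → ℝ | ∀ i, 0 < c i} = ⋂ i, {c | 0 < c i} := by
          ext; simp [Set.mem_iInter]
        rw [h]
        exact isOpen_iInter_of_finite fun i =>
          isOpen_lt continuous_const (continuous_apply i)
      have himg : g '' {c | ∀ i, 0 < c i} ⊆ coneSet b S := by
        rintro _ ⟨c, hc, rfl⟩; exact ⟨c, fun i => (hc i).le, rfl⟩
      have hint : g (1 : Fin d → ℝ) ∈ interior (coneSet b S) :=
        interior_maximal himg (hopen _ hPos) ⟨1, fun _ => one_pos, rfl⟩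
      obtain ⟨f, hf⟩ := geometric_hahn_banach_open_point
        ((coneSet_convex b S).interior) isOpen_interior hni
      -- every point of the cone lies in the closure of the interior
      have hCsub : coneSet b S ⊆ closure (interior (coneSet b S)) := by
        intro x hx
        have htend : Filter.Tendsto (fun t : ℝ => (1 - t) • x + t • g (1 : Fin d → ℝ))
            (nhdsWithin 0 (Set.Ioi 0)) (nhds x) := by
          have hc : Continuous (fun t : ℝ => (1 - t) • x + t • g (1 : Fin d → ℝ)) := by
            continuity
          have h0 := hc.tendsto 0
          simpa using h0.mono_left nhdsWithin_le_nhds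
        refine mem_closure_of_tendsto htend ?_
        filter_upwards [Ioo_mem_nhdsGT_of_mem (Set.left_mem_Ico.2 one_pos)] with t ht
        exact (coneSet_convex b S).combo_closure_interior_mem_interior
          (subset_closure hx) hint (by linarith [ht.2]) ht.1 (by ring)
      have hle : ∀ a ∈ coneSet b S, f a ≤ f ρ := by
        intro a ha
        have h2 : closure (interior (coneSet b S)) ⊆ f ⁻¹' Set.Iic (f ρ) :=
          closure_minimal (fun z hz => (hf z hz).le) (isClosed_Iic.preimage f.continuous)
        exact h2 (hCsub ha)
      have hρ0 : 0 ≤ f ρ := by simpa using hle 0 (coneSet_zero b S)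
      have hbneg : ∀ i ∈ S, f (b i) ≤ 0 := by
        intro i hi
        by_contra hpos
        push_neg at hpos
        have h2 : ((f ρ + 1) / f (b i)) • b i ∈ coneSet b S :=
          coneSet_smul (by positivity) (coneSet_base hi)
        have h3 := hle _ h2
        rw [map_smul, smul_eq_mul, div_mul_cancel₀ _ (ne_of_gt hpos)] at h3
        linarith
      have hCnonpos : ∀ a ∈ coneSet b S, f a ≤ 0 := by
        rintro a ⟨c, hc, rfl⟩
        rw [map_sum]
        refine Finset.sum_nonpos fun i hi => ?_
        rw [map_smul, smul_eq_mul]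
        exact mul_nonpos_iff.2 (Or.inl ⟨hc i, hbneg i hi⟩)
      have hρle : f ρ ≤ 0 := by
        have h2 : closure (coneSet b S) ⊆ f ⁻¹' Set.Iic 0 :=
          closure_minimal (fun z hz => hCnonpos z hz) (isClosed_Iic.preimage f.continuous)
        exact h2 hcl
      have hfρ : f ρ = 0 := le_antisymm hρle hρ0
      set T := S.filter (fun i => f (b i) = 0) with hT
      set U := Submodule.span ℝ (b '' (↑T : Set (Fin d))) with hU
      have hUne : U ≠ ⊤ := by
        intro htopU
        have hfa : f (g (1 : Fin d → ℝ)) < 0 := hfρ ▸ hf _ hint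
        have hker : U ≤ LinearMap.ker (f : V →ₗ[ℝ] ℝ) := by
          rw [hU, Submodule.span_le]
          rintro v ⟨i, hi, rfl⟩
          have h2 := (Finset.mem_filter.1 (Finset.mem_coe.1 hi)).2
          simpa [LinearMap.mem_ker] using h2
        have h3 : f (g (1 : Fin d → ℝ)) = 0 := by
          have := hker (htopU ▸ Submodule.mem_top : g (1 : Fin d → ℝ) ∈ U)
          simpa using this
        linarith
      -- limit argument: ρ lies in U
      obtain ⟨x, hxC, hxρ⟩ := mem_closure_iff_seq_limit.1 hcl
      choose c hc0 hceq using hxC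
      have hsplit : ∀ n, x n = (∑ i ∈ T, c n i • b i) + ∑ i ∈ S \ T, c n i • b i := by
        intro n
        have hTS : T ⊆ S := hT ▸ Finset.filter_subset _ S
        rw [hceq n, ← Finset.sum_sdiff hTS]
        exact (add_comm _ _)
      have hfx : Filter.Tendsto (fun n => f (x n)) Filter.atTop (nhds 0) := by
        have h2 := (f.continuous.tendsto ρ).comp hxρ
        rwa [hfρ] at h2
      have hcnull : ∀ i ∈ S \ T, Filter.Tendsto (fun n => c n i) Filter.atTop (nhds 0) := by
        intro i hi
        have hiS : i ∈ S := (Finset.mem_sdiff.1 hi).1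
        have hfbi : f (b i) < 0 := by
          refine lt_of_le_of_ne (hbneg i hiS) fun h0 => ?_
          exact (Finset.mem_sdiff.1 hi).2 (Finset.mem_filter.2 ⟨hiS, h0⟩)
        have key : Filter.Tendsto (fun n => c n i * f (b i)) Filter.atTop (nhds 0) := by
          refine tendsto_of_tendsto_of_tendsto_of_le_of_le hfx tendsto_const_nhds
            (fun n => ?_) (fun n => ?_)
          · have h2 : f (x n) = ∑ j ∈ S, c n j * f (b j) := by
              rw [hceq n, map_sum]
              exact Finset.sum_congr rfl fun j _ => by rw [map_smul, smul_eq_mul]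
            rw [h2, ← Finset.add_sum_erase _ _ hiS]
            have h3 : ∑ j ∈ S.erase i, c n j * f (b j) ≤ 0 :=
              Finset.sum_nonpos fun j hj =>
                mul_nonpos_iff.2 (Or.inl ⟨hc0 n j, hbneg j (Finset.mem_of_mem_erase hj)⟩)
            linarith
          · exact mul_nonpos_iff.2 (Or.inl ⟨hc0 n i, hfbi.le⟩)
        have h4 := key.mul_const (f (b i))⁻¹
        simpa [mul_inv_cancel_right₀ hfbi.ne] using h4
      have hz : Filter.Tendsto (fun n => ∑ i ∈ S \ T, c n i • b i) Filter.atTop (nhds 0) := by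
        have h2 : Filter.Tendsto (fun n => ∑ i ∈ S \ T, c n i • b i) Filter.atTop
            (nhds (∑ i ∈ S \ T, (0 : ℝ) • b i)) :=
          tendsto_finset_sum _ fun i hi => (hcnull i hi).smul_const (b i)
        simpa using h2
      have hy : Filter.Tendsto (fun n => ∑ i ∈ T, c n i • b i) Filter.atTop (nhds ρ) := by
        have h2 : (fun n => ∑ i ∈ T, c n i • b i)
            = fun n => x n - ∑ i ∈ S \ T, c n i • b i := by
          funext n; rw [hsplit n]; abel
        rw [h2]
        simpa using hxρ.sub hz
      have hρU : ρ ∈ U := by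
        have hUc : IsClosed (U : Set V) := U.closed_of_finiteDimensional
        refine hUc.mem_of_tendsto hy (Filter.Eventually.of_forall fun n => ?_)
        exact Submodule.sum_smul_mem U _ fun i hi =>
          Submodule.subset_span ⟨i, by simpa using hi, rfl⟩
      exact H T hUne hρU
    · -- the subset does not span: the cone lies in a proper closed subspace
      exact H S htop
        (closure_minimal (coneSet_subset_span b S)
          (Submodule.closed_of_finiteDimensional _) hcl)
  · -- backward direction
    intro H S hSne hρ
    set U₀ := Submodule.span ℝ (b '' (↑S : Set (Fin d))) with hU₀
    set S' : Finset (Fin d) := Finset.univ.filter (fun i => b i ∈ U₀) with hS'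
    have hmemS' : ∀ i, i ∈ S' ↔ b i ∈ U₀ := fun i => by simp [hS']
    -- quasi-symmetry: the cone on S' contains the negatives of its generators
    have hneg : ∀ i ∈ S', -(b i) ∈ coneSet b S' := by
      intro i hiS'
      by_cases hb0 : b i = 0
      · rw [hb0, neg_zero]; exact coneSet_zero b S'
      set ℓ := Submodule.span ℝ ({b i} : Set V) with hℓ
      have hrank : Module.finrank ℝ ↥ℓ = 1 := finrank_span_singleton hb0
      have h0 := hqs ℓ hrank
      have hℓU : ∀ j, b j ∈ ℓ → j ∈ S' := by
        intro j hj
        rw [hmemS']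
        exact Submodule.span_le.2
          (Set.singleton_subset_iff.2 ((hmemS' i).1 hiS')) hj
      have hsumS' : ∑ j ∈ S', (if b j ∈ ℓ then b j else 0) = 0 := by
        rw [Finset.sum_subset (Finset.subset_univ S')
          (fun j _ hj => if_neg fun h => hj (hℓU j h))]
        exact h0
      have hbiℓ : b i ∈ ℓ := Submodule.mem_span_singleton_self _
      have hkey : -(b i) = ∑ j ∈ S'.erase i, (if b j ∈ ℓ then b j else 0) := by
        have h2 := Finset.add_sum_erase S' (fun j => if b j ∈ ℓ then b j else 0) hiS'
        simp only [if_pos hbiℓ] at h2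
        rw [hsumS'] at h2
        exact neg_eq_of_add_eq_zero_right h2
      refine ⟨fun j => if j ∈ S'.erase i ∧ b j ∈ ℓ then 1 else 0,
        fun j => by dsimp only; split <;> norm_num, ?_⟩
      have h3 : ∑ j ∈ S', (if j ∈ S'.erase i ∧ b j ∈ ℓ then (1 : ℝ) else 0) • b j
          = ∑ j ∈ S'.erase i, (if b j ∈ ℓ then b j else 0) := by
        rw [← Finset.sum_subset (Finset.erase_subset i S')
          (fun j _ hj => by simp [hj])]
        refine Finset.sum_congr rfl fun j hj => ?_
        by_cases hP : b j ∈ ℓ <;> simp [hj, hP]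
      rw [h3, ← hkey]
    have hsum_mem : ∀ (T' : Finset (Fin d)) (g : Fin d → V),
        (∀ i ∈ T', g i ∈ coneSet b S') → ∑ i ∈ T', g i ∈ coneSet b S' :=
      fun T' g hg => coneSet_sum T' g hg
    -- the cone on S' is a submodule
    let p : Submodule ℝ V :=
      { carrier := coneSet b S'
        add_mem' := fun hx hy => coneSet_add hx hy
        zero_mem' := coneSet_zero b S'
        smul_mem' := by
          intro r x hx
          rcases le_or_gt 0 r with hr | hr
          · exact coneSet_smul hr hx
          · obtain ⟨c, hc, rfl⟩ := hx
            rw [Finset.smul_sum]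
            refine hsum_mem _ _ fun i hi => ?_
            have h4 : r • c i • b i = ((-r) * c i) • (-(b i)) := by
              rw [smul_neg, ← neg_smul, neg_mul, neg_neg, mul_smul]
            rw [h4]
            exact coneSet_smul (mul_nonneg (by linarith) (hc i)) (hneg i hi) }
    have hU₀p : U₀ ≤ p := by
      rw [hU₀, Submodule.span_le]
      rintro v ⟨i, hi, rfl⟩
      exact coneSet_base ((hmemS' i).2
        (Submodule.subset_span ⟨i, hi, rfl⟩))
    have hρC : ρ ∈ coneSet b S' := hU₀p hρ
    have hCsubU : coneSet b S' ⊆ (U₀ : Set V) := by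
      rintro x ⟨c, hc, rfl⟩
      exact Submodule.sum_smul_mem U₀ _ fun i hi => (hmemS' i).1 hi
    have hEq : coneSet b S' = (U₀ : Set V) :=
      Set.Subset.antisymm hCsubU fun x hx => hU₀p hx
    have hclosed : IsClosed (U₀ : Set V) := U₀.closed_of_finiteDimensional
    have hintU : interior (U₀ : Set V) = ∅ := by
      by_contra h
      exact hSne (U₀.eq_top_of_nonempty_interior' (Set.nonempty_iff_ne_empty.2 h))
    have hfr : ρ ∈ frontier (coneSet b S') := by
      rw [hEq]
      refine ⟨subset_closure hρ, ?_⟩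
      rw [hintU]
      exact Set.notMem_empty ρ
    exact H S' hfr
end

section
/- Let Δ = ∑ᵢ [-1/2, 0] bᵢ ⊂ ℝⁿ be the zonotope of vectors b₁,…,b_d spanning ℝⁿ with ∑_{bᵢ∈ℓ} bᵢ = 0 for every line ℓ through 0. Let F be a facet of Δ with outward inequality ⟨λ, ·⟩ ≤ c (so ⟨λ, x⟩ ≤ c on Δ with equality on F), and set J = {i : ⟨λ, bᵢ⟩ > 0}. If χ ∈ ρ₀ + F for some ρ₀ ∈ ℝⁿ, then for every nonempty 𝖩 ⊆ J, the point χ + ∑_{j∈𝖩} bⱼ lies in ρ₀ + Δ but not in ρ₀ + F. -/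
/-- The zonotope `∑ᵢ [-1/2,0]·bᵢ`. -/
def zono {V : Type*} [AddCommGroup V] [Module ℝ V] {d : ℕ} (b : Fin d → V) : Set V :=
  {x : V | ∃ β : Fin d → ℝ, (∀ i, β i ∈ Set.Icc (-(1/2) : ℝ) 0) ∧ x = ∑ i, β i • b i}

/-!
On the facet where `l` is minimal, every `bᵢ` with `l bᵢ > 0` has coefficient `-1/2` and every
`bᵢ` with `l bᵢ < 0` has coefficient `0`. The vector `∑_{j ∈ 𝒥} bⱼ` is absorbed line by line: if
the vectors on a line `ℓ` have total `|l|`-mass `M` and those indexed by `𝒥` have `l`-mass `A`,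
raise the coefficients of the vectors of `ℓ` on the positive side of `l` and lower those on the
negative side by `r = A / M`. By quasi-symmetry both sides carry mass `M / 2`, so `A ≤ M / 2` and
the coefficients stay in `[-1/2, 0]`; the `l`-value on `ℓ` grows by `r M = A`, and a vector of `ℓ`
is determined by its `l`-value. The new point leaves the facet because `l` strictly grows.
-/

open scoped Classical

section LineSums

variable {ι K V : Type*} [Fintype ι] [Field K] [AddCommGroup V] [Module K V]

theorem span_singleton_eq_of_mem_of_map_ne_zero (l : V →ₗ[K] K) {v w : V}
    (hv : v ∈ K ∙ w) (hlv : l v ≠ 0) : (K ∙ v) = K ∙ w := by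
  obtain ⟨t, rfl⟩ := Submodule.mem_span_singleton.1 hv
  have ht : t ≠ 0 := by rintro rfl; simp at hlv
  exact Submodule.span_singleton_smul_eq (IsUnit.mk0 t ht) w

theorem map_eq_zero_of_mem_span_singleton (l : V →ₗ[K] K) {v w : V}
    (hv : v ∈ K ∙ w) (hlw : l w = 0) : l v = 0 := by
  obtain ⟨t, rfl⟩ := Submodule.mem_span_singleton.1 hv
  simp [hlw]

theorem eq_zero_of_mem_span_singleton_of_map_eq_zero (l : V →ₗ[K] K) {v w : V}
    (hv : v ∈ K ∙ w) (hlw : l w ≠ 0) (hlv : l v = 0) : v = 0 := by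
  obtain ⟨t, rfl⟩ := Submodule.mem_span_singleton.1 hv
  simp_all

theorem sum_smul_eq_zero_of_line_sums (b : ι → V) (l : V →ₗ[K] K) (g : ι → K)
    (hg : ∀ i, l (b i) = 0 → g i = 0)
    (hline : ∀ k, l (b k) ≠ 0 → ∑ i with b i ∈ K ∙ b k, g i * l (b i) = 0) :
    ∑ i, g i • b i = 0 := by
  rw [← Finset.sum_fiberwise_of_maps_to (g := fun i => K ∙ b i)
    (fun i _ => Finset.mem_image_of_mem (fun i => K ∙ b i) (Finset.mem_univ i))]
  refine Finset.sum_eq_zero fun ℓ hℓ => ?_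
  obtain ⟨k, -, rfl⟩ := Finset.mem_image.1 hℓ
  have hmem : ∀ i ∈ ({i | (K ∙ b i) = K ∙ b k} : Finset ι), b i ∈ K ∙ b k :=
    fun i hi => (Finset.mem_filter.1 hi).2 ▸ Submodule.mem_span_singleton_self (b i)
  by_cases hk : l (b k) = 0
  · refine Finset.sum_eq_zero fun i hi => ?_
    rw [hg i (map_eq_zero_of_mem_span_singleton l (hmem i hi) hk), zero_smul]
  refine eq_zero_of_mem_span_singleton_of_map_eq_zero l
    (Submodule.sum_mem _ fun i hi => Submodule.smul_mem _ _ (hmem i hi)) hk ?_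
  simp only [map_sum, map_smul, smul_eq_mul]
  rw [← hline k hk]
  refine Finset.sum_subset (fun i hi => Finset.mem_filter.2 ⟨Finset.mem_univ i, hmem i hi⟩) ?_
  intro i hi hni
  by_contra hne
  exact hni <| Finset.mem_filter.2 ⟨Finset.mem_univ i, span_singleton_eq_of_mem_of_map_ne_zero l
    (Finset.mem_filter.1 hi).2 (right_ne_zero_of_mul hne)⟩

end LineSums

section LineShare

variable {ι V : Type*} [Fintype ι] [AddCommGroup V] [Module ℝ V]

theorem two_mul_sum_filter_le_sum_abs {f : ι → ℝ} {t : Finset ι} {p : ι → Prop}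
    (ht : ∀ i ∈ t, 0 ≤ f i) (hp : ∑ i with p i, f i = 0) :
    2 * ∑ i ∈ t with p i, f i ≤ ∑ i with p i, |f i| :=
  calc 2 * ∑ i ∈ t with p i, f i
      ≤ 2 * ∑ i with p i, max (f i) 0 := by
        gcongr
        calc ∑ i ∈ t with p i, f i = ∑ i ∈ t with p i, max (f i) 0 :=
              Finset.sum_congr rfl fun i hi =>
                (max_eq_left (ht i (Finset.filter_subset _ _ hi))).symm
          _ ≤ ∑ i with p i, max (f i) 0 :=
              Finset.sum_le_sum_of_subset_of_nonneg
                (Finset.filter_subset_filter _ (Finset.subset_univ t)) fun i _ _ => le_max_right _ _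
    _ = ∑ i with p i, (|f i| + f i) := by
        rw [Finset.mul_sum]
        refine Finset.sum_congr rfl fun i _ => ?_
        rcases le_total 0 (f i) with h | h
        · rw [max_eq_left h, abs_of_nonneg h]; ring
        · rw [max_eq_right h, abs_of_nonpos h]; ring
    _ = ∑ i with p i, |f i| := by rw [Finset.sum_add_distrib, hp, add_zero]

/-- The ratio `r = A / M` of the header, for the line `ℓ`. -/
noncomputable def lineShare (b : ι → V) (l : V →ₗ[ℝ] ℝ) (𝒥 : Finset ι) (ℓ : Submodule ℝ V) : ℝ :=
  (∑ i ∈ 𝒥 with b i ∈ ℓ, l (b i)) / ∑ i with b i ∈ ℓ, |l (b i)|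

variable {b : ι → V} {l : V →ₗ[ℝ] ℝ} {𝒥 : Finset ι} {ℓ : Submodule ℝ V}

theorem lineShare_nonneg (h𝒥 : ∀ j ∈ 𝒥, 0 < l (b j)) : 0 ≤ lineShare b l 𝒥 ℓ :=
  div_nonneg (Finset.sum_nonneg fun j hj => (h𝒥 j (Finset.filter_subset _ _ hj)).le)
    (Finset.sum_nonneg fun _ _ => abs_nonneg _)

theorem lineShare_le_half (h𝒥 : ∀ j ∈ 𝒥, 0 < l (b j)) (hℓ : ∑ i with b i ∈ ℓ, l (b i) = 0) :
    lineShare b l 𝒥 ℓ ≤ 1 / 2 := by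
  have := two_mul_sum_filter_le_sum_abs (fun j hj => (h𝒥 j hj).le) hℓ
  exact div_le_of_le_mul₀ (Finset.sum_nonneg fun _ _ => abs_nonneg _) (by norm_num)
    (by linarith)

theorem lineShare_mul_sum_abs (h𝒥 : ∀ j ∈ 𝒥, 0 < l (b j))
    (hℓ : ∑ i with b i ∈ ℓ, l (b i) = 0) :
    lineShare b l 𝒥 ℓ * ∑ i with b i ∈ ℓ, |l (b i)| = ∑ i ∈ 𝒥 with b i ∈ ℓ, l (b i) := by
  refine div_mul_cancel_of_imp fun h => le_antisymm ?_
    (Finset.sum_nonneg fun j hj => (h𝒥 j (Finset.filter_subset _ _ hj)).le)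
  linarith [two_mul_sum_filter_le_sum_abs (fun j hj => (h𝒥 j hj).le) hℓ]

end LineShare

section zono

variable {V : Type*} [AddCommGroup V] [Module ℝ V] {d : ℕ} {b : Fin d → V}
  {l : V →ₗ[ℝ] ℝ} {c : ℝ} {β : Fin d → ℝ}

theorem coeff_eq_of_mem_facet (hsupp : ∀ x ∈ zono b, c ≤ l x)
    (hβ : ∀ i, β i ∈ Set.Icc (-(1/2) : ℝ) 0) (hc : l (∑ i, β i • b i) = c) (i : Fin d) :
    (0 < l (b i) → β i = -(1/2)) ∧ (l (b i) < 0 → β i = 0) := by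
  set v : Fin d → ℝ := fun i => if 0 < l (b i) then -(1/2) else 0
  have hterm : ∀ i ∈ Finset.univ, v i * l (b i) ≤ β i * l (b i) := by
    intro i _
    by_cases h : 0 < l (b i)
    · simp only [v, if_pos h]; nlinarith [(hβ i).1]
    · simp only [v, if_neg h]; nlinarith [(hβ i).2]
  have hv : ∑ i, v i • b i ∈ zono b :=
    ⟨v, fun i => by simp only [v]; split_ifs <;> norm_num, rfl⟩
  have hsum : ∑ i, v i * l (b i) = ∑ i, β i * l (b i) := by
    refine le_antisymm (Finset.sum_le_sum hterm) ?_
    simpa only [← hc, map_sum, map_smul, smul_eq_mul] using hsupp _ hv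
  have hi := (Finset.sum_eq_sum_iff_of_le hterm).1 hsum i (Finset.mem_univ i)
  refine ⟨fun h => ?_, fun h => ?_⟩
  · simp only [v, if_pos h] at hi
    exact (mul_right_cancel₀ h.ne' hi).symm
  · simp only [v, if_neg h.not_gt, zero_mul] at hi
    exact (mul_eq_zero.1 hi.symm).resolve_right h.ne

theorem sum_smul_add_sum_mem_zono
    (hqs : ∀ ℓ : Submodule ℝ V, Module.finrank ℝ ↥ℓ = 1 →
      (∑ i : Fin d, if b i ∈ ℓ then b i else 0) = 0)
    (hsupp : ∀ x ∈ zono b, c ≤ l x) (hβ : ∀ i, β i ∈ Set.Icc (-(1/2) : ℝ) 0)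
    (hc : l (∑ i, β i • b i) = c) {𝒥 : Finset (Fin d)} (h𝒥 : ∀ j ∈ 𝒥, 0 < l (b j)) :
    ∑ i, β i • b i + ∑ j ∈ 𝒥, b j ∈ zono b := by
  set r : Fin d → ℝ := fun i => lineShare b l 𝒥 (ℝ ∙ b i) * SignType.sign (l (b i))
  have hline : ∀ k, l (b k) ≠ 0 → ∑ i with b i ∈ ℝ ∙ b k, l (b i) = 0 := by
    intro k hk
    have hbk : b k ≠ 0 := fun h => hk (by rw [h, map_zero])
    simpa [map_sum, apply_ite l, Finset.sum_filter] using
      congrArg l (hqs _ (finrank_span_singleton hbk))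
  refine ⟨fun i => β i + r i, fun i => ?_, ?_⟩
  · obtain ⟨hpos, hneg⟩ := coeff_eq_of_mem_facet hsupp hβ hc i
    rcases lt_trichotomy (l (b i)) 0 with h | h | h
    · have h0 := lineShare_nonneg h𝒥 (ℓ := ℝ ∙ b i)
      have h1 := lineShare_le_half h𝒥 (hline i h.ne)
      simp only [r, hneg h, sign_neg h, SignType.coe_neg_one]
      constructor <;> linarith
    · simpa [r, h] using hβ i
    · have h0 := lineShare_nonneg h𝒥 (ℓ := ℝ ∙ b i)
      have h1 := lineShare_le_half h𝒥 (hline i h.ne')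
      simp only [r, hpos h, sign_pos h, SignType.coe_one]
      constructor <;> linarith
  · simp only [add_smul, Finset.sum_add_distrib]
    congr 1
    have h𝒥sum : ∑ j ∈ 𝒥, b j = ∑ i, (if i ∈ 𝒥 then 1 else 0 : ℝ) • b i := by
      simp only [ite_smul, one_smul, zero_smul, Finset.sum_ite_mem, Finset.univ_inter]
    rw [h𝒥sum, ← sub_eq_zero, ← Finset.sum_sub_distrib]
    simp only [← sub_smul]
    refine sum_smul_eq_zero_of_line_sums b l _ (fun i hi => ?_) (fun k hk => ?_)
    · have : i ∉ 𝒥 := fun hj => (h𝒥 i hj).ne' hi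
      simp [r, hi, this]
    · have hr : ∀ i ∈ ({i | b i ∈ ℝ ∙ b k} : Finset (Fin d)),
          r i * l (b i) = lineShare b l 𝒥 (ℝ ∙ b k) * |l (b i)| := by
        intro i hi
        by_cases hi0 : l (b i) = 0
        · simp [hi0]
        · rw [mul_assoc, sign_mul_self,
            span_singleton_eq_of_mem_of_map_ne_zero l (Finset.mem_filter.1 hi).2 hi0]
      rw [Finset.sum_congr rfl fun i hi => by rw [sub_mul, hr i hi, ite_mul, one_mul, zero_mul],
        Finset.sum_sub_distrib, ← Finset.mul_sum, lineShare_mul_sum_abs h𝒥 (hline k hk),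
        sub_eq_zero, Finset.sum_ite_mem, Finset.filter_inter, Finset.univ_inter]

end zono

open scoped Classical in
theorem stmt14_general {V : Type*} [AddCommGroup V] [Module ℝ V]
    {d : ℕ} (b : Fin d → V)
    (hqs : ∀ ℓ : Submodule ℝ V, Module.finrank ℝ ↥ℓ = 1 →
      (∑ i : Fin d, if b i ∈ ℓ then b i else 0) = 0)
    (l : V →ₗ[ℝ] ℝ) (c : ℝ)
    (hsupp : ∀ x ∈ zono b, c ≤ l x)
    (ρ₀ χ : V) (hχ : χ - ρ₀ ∈ {x ∈ zono b | l x = c}) :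
    ∀ 𝒥 : Finset (Fin d), 𝒥.Nonempty → (∀ j ∈ 𝒥, 0 < l (b j)) →
      (χ + ∑ j ∈ 𝒥, b j) - ρ₀ ∈ zono b ∧
      (χ + ∑ j ∈ 𝒥, b j) - ρ₀ ∉ {x ∈ zono b | l x = c} := by
  obtain ⟨⟨β, hβ, hβχ⟩, hc⟩ := hχ
  rw [hβχ] at hc
  intro 𝒥 h𝒥ne h𝒥
  have hshift : (χ + ∑ j ∈ 𝒥, b j) - ρ₀ = ∑ i, β i • b i + ∑ j ∈ 𝒥, b j := by
    rw [← hβχ]; abel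
  rw [hshift]
  refine ⟨sum_smul_add_sum_mem_zono hqs hsupp hβ hc h𝒥, fun ⟨_, hfacet⟩ => ?_⟩
  rw [map_add, hc, map_sum] at hfacet
  linarith [Finset.sum_pos h𝒥 h𝒥ne]

open scoped Classical in
/-- Let `Δ = ∑ᵢ [-1/2,0]bᵢ` be the zonotope of a quasi-symmetric spanning collection,
`F = {x ∈ Δ | ⟨λ,x⟩ = c}` the facet on which the supporting functional `λ` (with
`⟨λ,·⟩ ≥ c` on `Δ`) is extremal, and `J = {i : ⟨λ,bᵢ⟩ > 0}`. If `χ ∈ ρ₀ + F`, then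
for every nonempty `𝖩 ⊆ J` the point `χ + ∑_{j∈𝖩} bⱼ` lies in `ρ₀ + Δ` but not in
`ρ₀ + F`. -/
theorem stmt14 {V : Type*} [AddCommGroup V] [Module ℝ V] [FiniteDimensional ℝ V]
    {d : ℕ} (b : Fin d → V)
    (hspan : Submodule.span ℝ (Set.range b) = ⊤)
    (hqs : ∀ ℓ : Submodule ℝ V, Module.finrank ℝ ↥ℓ = 1 →
      (∑ i : Fin d, if b i ∈ ℓ then b i else 0) = 0)
    (l : V →ₗ[ℝ] ℝ) (c : ℝ)
    (hsupp : ∀ x ∈ zono b, c ≤ l x)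
    (hne : ∃ x ∈ zono b, l x = c)
    (ρ₀ χ : V) (hχ : χ - ρ₀ ∈ {x ∈ zono b | l x = c}) :
    ∀ 𝒥 : Finset (Fin d), 𝒥.Nonempty → (∀ j ∈ 𝒥, 0 < l (b j)) →
      (χ + ∑ j ∈ 𝒥, b j) - ρ₀ ∈ zono b ∧
      (χ + ∑ j ∈ 𝒥, b j) - ρ₀ ∉ {x ∈ zono b | l x = c} :=
  stmt14_general b hqs l c hsupp ρ₀ χ hχ
end

section
/- Let b₁,…,b_d span a finite-dimensional real vector space V with the quasi-symmetry property (∑_{bᵢ∈ℓ} bᵢ = 0 for every line ℓ through 0), let Δ = ∑ᵢ [-1/2,0]bᵢ, let λ ∈ V* be such that ⟨λ,·⟩ = c is a supporting hyperplane of Δ defining a facet F, and set J = {i : ⟨λ, bᵢ⟩ > 0}. If χ = ρ₀ - (1/2)∑_{i∈J'} bᵢ' has a representation χ = ρ₀ - (1/2)∑_{i∈J} bᵢ + ∑_{i∈J''} βᵢ bᵢ with βᵢ ∈ (-1/2, 0), J'' ∩ J = ∅, then χ lies in the relative interior of the facet ρ₀ + F translated to ρ₀ and satisfies ⟨λ,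 χ - ρ₀⟩ = -(1/2)∑_{i∈J} ⟨λ, bᵢ⟩. -/
/-!
On the box `γ ∈ [-1/2,0]ᵈ` each term satisfies `γᵢ⟨λ,bᵢ⟩ ≥ -(1/2) max(⟨λ,bᵢ⟩, 0)`, so the minimum
of `λ` on `Δ` is `-(1/2)∑_{i∈J}⟨λ,bᵢ⟩`, attained exactly when `γᵢ = -1/2` on `J` and `γᵢ = 0`
where `⟨λ,bᵢ⟩ < 0`. Hence `F` is the translate by `-(1/2)∑_{i∈J} bᵢ` of the image of the box
`[-1/2,0]^Jz` under `γ ↦ ∑_{i∈Jz} γᵢbᵢ`. A linear map out of a finite-dimensional space is open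
onto its range, and the range contains the affine span of the image; so `χ - ρ₀`, the image of
the interior point `β` of the box, lies in the relative interior of `F`.
-/

open Set Pointwise

section IntrinsicInterior

variable {𝕜 E F : Type*} [NontriviallyNormedField 𝕜] [CompleteSpace 𝕜]
  [NormedAddCommGroup E] [NormedSpace 𝕜 E] [FiniteDimensional 𝕜 E]
  [NormedAddCommGroup F] [NormedSpace 𝕜 F]

theorem LinearMap.image_interior_subset_intrinsicInterior (f : E →ₗ[𝕜] F) (s : Set E) :
    f '' interior s ⊆ intrinsicInterior 𝕜 (f '' s) := by
  rintro _ ⟨y, hy, rfl⟩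
  obtain ⟨U, hU, hUf⟩ := isOpen_induced_iff.mp <|
    isOpenMap_of_finiteDimensional f.rangeRestrict f.surjective_rangeRestrict _ isOpen_interior
  have hspan : (affineSpan 𝕜 (f '' s) : Set F) ⊆ LinearMap.range f := by
    refine (affineSpan_le (Q := (LinearMap.range f).toAffineSubspace)).mpr ?_
    rintro _ ⟨x, -, rfl⟩
    exact LinearMap.mem_range_self f x
  have hU_sub : ∀ z ∈ LinearMap.range f, z ∈ U → z ∈ f '' interior s := by
    rintro z hz hzU
    obtain ⟨w, hw, hwz⟩ : (⟨z, hz⟩ : LinearMap.range f) ∈ f.rangeRestrict '' interior s :=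
      hUf ▸ hzU
    exact ⟨w, hw, congrArg Subtype.val hwz⟩
  rw [mem_intrinsicInterior]
  refine ⟨⟨f y, subset_affineSpan _ _ (mem_image_of_mem f (interior_subset hy))⟩, ?_, rfl⟩
  refine mem_interior.2 ⟨Subtype.val ⁻¹' U, ?_, hU.preimage continuous_subtype_val, ?_⟩
  · rintro ⟨z, hz⟩ hzU
    exact image_mono interior_subset (hU_sub z (hspan hz) hzU)
  · exact (hUf ▸ mem_image_of_mem _ hy : f.rangeRestrict y ∈ Subtype.val ⁻¹' U)

end IntrinsicInterior

theorem intrinsicInterior_vadd {𝕜 V P : Type*} [NormedField 𝕜] [NormedAddCommGroup V]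
    [NormedSpace 𝕜 V] [MetricSpace P] [NormedAddTorsor V P] (v : V) (s : Set P) :
    intrinsicInterior 𝕜 (v +ᵥ s) = v +ᵥ intrinsicInterior 𝕜 s := by
  simpa [Set.image_vadd] using
    (AffineIsometryEquiv.constVAdd 𝕜 P v).toAffineIsometry.intrinsicInterior_image s

theorem neg_half_mul_max_le_mul {t : ℝ} (ht : t ∈ Icc (-(1/2) : ℝ) 0) (a : ℝ) :
    -(1/2) * max a 0 ≤ t * a := by
  obtain ⟨h₁, h₂⟩ := ht
  rcases le_total a 0 with ha | ha
  · rw [max_eq_right ha]; nlinarith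
  · rw [max_eq_left ha]; nlinarith

theorem eq_of_mul_eq_neg_half_mul_max {t a : ℝ} (h : t * a = -(1/2) * max a 0) :
    (0 < a → t = -(1/2)) ∧ (a < 0 → t = 0) := by
  refine ⟨fun ha => ?_, fun ha => ?_⟩
  · rw [max_eq_left ha.le] at h
    exact mul_right_cancel₀ ha.ne' (by linarith)
  · rw [max_eq_right ha.le, mul_zero] at h
    exact (mul_eq_zero.mp h).resolve_right ha.ne

def partialCombination {ι R M : Type*} [Semiring R] [AddCommMonoid M] [Module R M] (v : ι → M)
    (s : Finset ι) : (ι → R) →ₗ[R] M :=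
  ∑ i ∈ s, (LinearMap.proj i).smulRight (v i)

@[simp]
theorem partialCombination_apply {ι R M : Type*} [Semiring R] [AddCommMonoid M] [Module R M]
    (v : ι → M) (s : Finset ι) (γ : ι → R) : partialCombination v s γ = ∑ i ∈ s, γ i • v i := by
  simp [partialCombination]

section Zonotope

variable {V : Type*} [AddCommGroup V] [Module ℝ V] {d : ℕ} (b : Fin d → V) (l : V →ₗ[ℝ] ℝ)

noncomputable def zonoMinValue : ℝ := -(1/2) * ∑ i, max (l (b i)) 0

variable {b l}

theorem apply_sum_smul (γ : Fin d → ℝ) {s : Finset (Fin d)} :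
    l (∑ i ∈ s, γ i • b i) = ∑ i ∈ s, γ i * l (b i) := by
  simp only [map_sum, map_smul, smul_eq_mul]

theorem zonoMinValue_le_of_mem_zono {x : V} (hx : x ∈ zono b) : zonoMinValue b l ≤ l x := by
  obtain ⟨γ, hγ, rfl⟩ := hx
  rw [zonoMinValue, Finset.mul_sum, apply_sum_smul]
  exact Finset.sum_le_sum fun i _ => neg_half_mul_max_le_mul (hγ i) _

theorem exists_mem_zono_apply_eq_zonoMinValue : ∃ x ∈ zono b, l x = zonoMinValue b l := by
  classical
  let γ : Fin d → ℝ := fun i => if 0 < l (b i) then -(1/2) else 0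
  refine ⟨∑ i, γ i • b i, ⟨γ, fun i => ?_, rfl⟩, ?_⟩
  · by_cases h : 0 < l (b i) <;> simp [γ, h]
  · rw [zonoMinValue, Finset.mul_sum, apply_sum_smul]
    refine Finset.sum_congr rfl fun i _ => ?_
    by_cases h : 0 < l (b i)
    · simp [γ, h, max_eq_left h.le]
    · simp [γ, h, max_eq_right (not_lt.mp h)]

theorem eq_zonoMinValue {c : ℝ} (hsupp : ∀ x ∈ zono b, c ≤ l x) (hne : ∃ x ∈ zono b, l x = c) :
    c = zonoMinValue b l := by
  obtain ⟨x₀, hx₀, hlx₀⟩ := exists_mem_zono_apply_eq_zonoMinValue (b := b) (l := l)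
  obtain ⟨x, hx, rfl⟩ := hne
  exact le_antisymm (hlx₀ ▸ hsupp x₀ hx₀) (zonoMinValue_le_of_mem_zono hx)

theorem zonoMinValue_eq {J : Finset (Fin d)} (hJ : ∀ i, i ∈ J ↔ 0 < l (b i)) :
    zonoMinValue b l = -(1/2) * ∑ i ∈ J, l (b i) := by
  classical
  have : J = Finset.univ.filter fun i => 0 < l (b i) := by ext i; simp [hJ]
  rw [zonoMinValue, this, Finset.sum_filter]
  congr 1
  refine Finset.sum_congr rfl fun i _ => ?_
  split_ifs with h
  · exact max_eq_left h.le
  · exact max_eq_right (not_lt.mp h)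

theorem coeff_of_apply_eq_zonoMinValue {γ : Fin d → ℝ} (hγ : ∀ i, γ i ∈ Icc (-(1/2) : ℝ) 0)
    (h : l (∑ i, γ i • b i) = zonoMinValue b l) (i : Fin d) :
    (0 < l (b i) → γ i = -(1/2)) ∧ (l (b i) < 0 → γ i = 0) := by
  refine eq_of_mul_eq_neg_half_mul_max ?_
  have hsum : ∑ j, (γ j * l (b j) - -(1/2) * max (l (b j)) 0) = 0 := by
    rw [Finset.sum_sub_distrib, ← apply_sum_smul, h, zonoMinValue, Finset.mul_sum, sub_self]
  have := (Finset.sum_eq_zero_iff_of_nonneg fun j _ =>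
    sub_nonneg.mpr (neg_half_mul_max_le_mul (hγ j) _)).mp hsum i (Finset.mem_univ i)
  linarith

theorem sum_smul_split_of_coeff {J Jz : Finset (Fin d)} (hJ : ∀ i, i ∈ J ↔ 0 < l (b i))
    (hJz : ∀ i, i ∈ Jz ↔ l (b i) = 0) {γ : Fin d → ℝ}
    (hγ : ∀ i, (0 < l (b i) → γ i = -(1/2)) ∧ (l (b i) < 0 → γ i = 0)) :
    ∑ i, γ i • b i = -(1/2 : ℝ) • ∑ i ∈ J, b i + ∑ i ∈ Jz, γ i • b i := by
  classical
  have hsplit : ∀ i, γ i • b i =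
      (if i ∈ J then -(1/2 : ℝ) • b i else 0) + (if i ∈ Jz then γ i • b i else 0) := by
    intro i
    rcases lt_trichotomy (l (b i)) 0 with hneg | hzero | hpos
    · have hJi : i ∉ J := by rw [hJ]; exact hneg.not_gt
      have hJzi : i ∉ Jz := by rw [hJz]; exact hneg.ne
      simp [hJi, hJzi, (hγ i).2 hneg]
    · have hJi : i ∉ J := by rw [hJ]; exact hzero.not_gt
      simp [hJi, (hJz i).mpr hzero]
    · have hJzi : i ∉ Jz := by rw [hJz]; exact hpos.ne'
      simp [(hJ i).mpr hpos, hJzi, (hγ i).1 hpos]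
  rw [Finset.sum_congr rfl fun i _ => hsplit i, Finset.sum_add_distrib, Finset.sum_ite_mem,
    Finset.sum_ite_mem, Finset.univ_inter, Finset.univ_inter, Finset.smul_sum]

theorem zono_facet_eq {J Jz : Finset (Fin d)} (hJ : ∀ i, i ∈ J ↔ 0 < l (b i))
    (hJz : ∀ i, i ∈ Jz ↔ l (b i) = 0) :
    {x ∈ zono b | l x = zonoMinValue b l} = (-(1/2 : ℝ) • ∑ i ∈ J, b i) +ᵥ
      partialCombination b Jz '' (Jz : Set (Fin d)).pi fun _ => Icc (-(1/2) : ℝ) 0 := by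
  classical
  ext x
  constructor
  · rintro ⟨⟨γ, hγ, rfl⟩, hlx⟩
    rw [sum_smul_split_of_coeff hJ hJz (coeff_of_apply_eq_zonoMinValue hγ hlx)]
    exact vadd_mem_vadd_set ⟨γ, fun i _ => hγ i, partialCombination_apply _ _ _⟩
  · intro hx
    obtain ⟨_, ⟨γ, hγ, rfl⟩, rfl⟩ := Set.mem_vadd_set.mp hx
    have hdisj : ∀ i ∈ Jz, i ∉ J := fun i hi hiJ =>
      ((hJ i).mp hiJ).ne' ((hJz i).mp hi)
    let γ' : Fin d → ℝ := fun i => if i ∈ J then -(1/2) else if i ∈ Jz then γ i else 0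
    have hcoeff : ∀ i, (0 < l (b i) → γ' i = -(1/2)) ∧ (l (b i) < 0 → γ' i = 0) := fun i =>
      ⟨fun hpos => if_pos ((hJ i).mpr hpos), fun hneg => by
        simp [γ', (hJ i).not.mpr hneg.not_gt, (hJz i).not.mpr hneg.ne]⟩
    have hx : ∑ i, γ' i • b i = (-(1/2 : ℝ) • ∑ i ∈ J, b i) +ᵥ partialCombination b Jz γ := by
      rw [sum_smul_split_of_coeff hJ hJz hcoeff, partialCombination_apply, vadd_eq_add]
      congr 1
      exact Finset.sum_congr rfl fun i hi => by simp [γ', hdisj i hi, hi]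
    refine ⟨⟨γ', fun i => ?_, hx.symm⟩, ?_⟩
    · by_cases hiJ : i ∈ J
      · simp [γ', hiJ]
      · by_cases hi : i ∈ Jz
        · simpa [γ', hiJ, hi] using hγ i hi
        · simp [γ', hiJ, hi]
    · have hzero : ∑ i ∈ Jz, γ i * l (b i) = 0 :=
        Finset.sum_eq_zero fun i hi => by rw [(hJz i).mp hi, mul_zero]
      rw [zonoMinValue_eq hJ, partialCombination_apply, vadd_eq_add, map_add, apply_sum_smul,
        hzero, add_zero, map_smul, map_sum, smul_eq_mul]

end Zonotope

open scoped Classical in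
theorem stmt19_general {V : Type*} [NormedAddCommGroup V] [NormedSpace ℝ V]
    {d : ℕ} (b : Fin d → V)
    (l : V →ₗ[ℝ] ℝ) (c : ℝ)
    (hsupp : ∀ x ∈ zono b, c ≤ l x) (hne : ∃ x ∈ zono b, l x = c)
    (J Jz : Finset (Fin d))
    (hJ : ∀ i, i ∈ J ↔ 0 < l (b i))
    (hJz : ∀ i, i ∈ Jz ↔ l (b i) = 0)
    (β : Fin d → ℝ) (hβ : ∀ i ∈ Jz, β i ∈ Set.Ioo (-(1/2) : ℝ) 0)
    (ρ₀ χ : V)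
    (hχ : χ = ρ₀ - (1/2 : ℝ) • ∑ i ∈ J, b i + ∑ i ∈ Jz, β i • b i) :
    χ - ρ₀ ∈ intrinsicInterior ℝ {x ∈ zono b | l x = c} ∧
    l (χ - ρ₀) = -(1/2) * ∑ i ∈ J, l (b i) := by
  have hχρ : χ - ρ₀ = (-(1/2 : ℝ) • ∑ i ∈ J, b i) +ᵥ partialCombination b Jz β := by
    rw [hχ, partialCombination_apply, vadd_eq_add, neg_smul]
    abel
  have hβ_int : β ∈ interior ((Jz : Set (Fin d)).pi fun _ => Icc (-(1/2) : ℝ) 0) := by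
    rwa [interior_pi_set Jz.finite_toSet, funext fun _ => interior_Icc]
  have hmem : χ - ρ₀ ∈ intrinsicInterior ℝ {x ∈ zono b | l x = c} := by
    rw [eq_zonoMinValue hsupp hne, zono_facet_eq hJ hJz, intrinsicInterior_vadd, hχρ]
    exact vadd_mem_vadd_set <|
      LinearMap.image_interior_subset_intrinsicInterior _ _ (mem_image_of_mem _ hβ_int)
  refine ⟨hmem, ?_⟩
  rw [(intrinsicInterior_subset hmem).2, eq_zonoMinValue hsupp hne, zonoMinValue_eq hJ]

open scoped Classical in
/-- Let `Δ = ∑ᵢ [-1/2,0]bᵢ` be the zonotope of a quasi-symmetric spanning collection,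
`λ` a functional supporting `Δ` (with `⟨λ,·⟩ ≥ c` on `Δ`, equality attained) defining
the facet `F = {x ∈ Δ | ⟨λ,x⟩ = c}`, `J = {i : ⟨λ,bᵢ⟩ > 0}` and
`Jz = {i : ⟨λ,bᵢ⟩ = 0}`. If `χ = ρ₀ - (1/2)∑_{i∈J} bᵢ + ∑_{i∈Jz} βᵢ bᵢ` with
`βᵢ ∈ (-1/2,0)`, then `χ` lies in `ρ₀ +` the relative interior of `F` and
`⟨λ, χ - ρ₀⟩ = -(1/2)∑_{i∈J} ⟨λ, bᵢ⟩`. -/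
theorem stmt19 {V : Type*} [NormedAddCommGroup V] [NormedSpace ℝ V]
    [FiniteDimensional ℝ V] {d : ℕ} (b : Fin d → V)
    (hspan : Submodule.span ℝ (Set.range b) = ⊤)
    (hqs : ∀ ℓ : Submodule ℝ V, Module.finrank ℝ ↥ℓ = 1 →
      (∑ i : Fin d, if b i ∈ ℓ then b i else 0) = 0)
    (l : V →ₗ[ℝ] ℝ) (c : ℝ)
    (hsupp : ∀ x ∈ zono b, c ≤ l x) (hne : ∃ x ∈ zono b, l x = c)
    (J Jz : Finset (Fin d))
    (hJ : ∀ i, i ∈ J ↔ 0 < l (b i))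
    (hJz : ∀ i, i ∈ Jz ↔ l (b i) = 0)
    (β : Fin d → ℝ) (hβ : ∀ i ∈ Jz, β i ∈ Set.Ioo (-(1/2) : ℝ) 0)
    (ρ₀ χ : V)
    (hχ : χ = ρ₀ - (1/2 : ℝ) • ∑ i ∈ J, b i + ∑ i ∈ Jz, β i • b i) :
    χ - ρ₀ ∈ intrinsicInterior ℝ {x ∈ zono b | l x = c} ∧
    l (χ - ρ₀) = -(1/2) * ∑ i ∈ J, l (b i) :=
  stmt19_general b l c hsupp hne J Jz hJ hJz β hβ ρ₀ χ hχ
end
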